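/- arXiv:2302.04590 — 3 statements merged into one kernel-verified Lean document; each statement's English description precedes it below -/
import Mathlib

section
/- Let e1, e2, e3, e4 be the standard basis of (ZMod 2)^4, and let v4 = a·e1 + b·e2 + c·e3 + d·e4 and v5 = p·e1 + q·e2 + r·e3 + s·e4 with coefficients in ZMod 2, where (c, d) ≠ (0, 0) and (r, s) ≠ (0, 0). Then there exists w ∈ {e3, e4, e3 + e4} with w ≠ c·e3 + d·e4 and w ≠ r·e3 + s·e4, and for any such w each of the six families {e1, e2, v4, w}, {e1, e1+e2, v4, w}, {e2, e1+e2, v4, w}, {e1, e2, v5, w}, {e1, e1+e2, v5, w}, {e2, e1+e2, v5, w} is linearly independent over ZMod 2 (hence a basis of (ZMod 2)^4). -/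
/-- The standard basis vectors of `(ZMod 2)⁴`. -/
def e1 : Fin 4 → ZMod 2 := ![1, 0, 0, 0]
def e2 : Fin 4 → ZMod 2 := ![0, 1, 0, 0]
def e3 : Fin 4 → ZMod 2 := ![0, 0, 1, 0]
def e4 : Fin 4 → ZMod 2 := ![0, 0, 0, 1]

/-!
Any two of `e1, e2, e1 + e2` are a basis of `⟨e1, e2⟩`, and modulo `⟨e1, e2⟩` the vector
`a • e1 + b • e2 + c • e3 + d • e4` becomes `c • e3 + d • e4`. Over `𝔽₂` two vectors are
independent as soon as they are nonzero and distinct, so each family is independent once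
`w ≠ c • e3 + d • e4`. Such a `w` exists since the two facet vectors exclude at most two of the
three nonzero vectors of `⟨e3, e4⟩`.
-/

theorem linearIndependent_pair_of_ne_zero_of_ne {V : Type*} [AddCommGroup V] [Module (ZMod 2) V]
    {x y : V} (hx : x ≠ 0) (hy : y ≠ 0) (hxy : x ≠ y) :
    LinearIndependent (ZMod 2) ![x, y] := by
  rw [LinearIndependent.pair_iff' hx]
  intro t
  obtain rfl | rfl : t = 0 ∨ t = 1 := by decide +revert
  · rw [zero_smul]; exact hy.symm
  · rw [one_smul]; exact hxy

theorem linearIndependent_four_of_map_eq_zero {R V W : Type*} [Ring R] [AddCommGroup V]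
    [Module R V] [AddCommGroup W] [Module R W] (f : V →ₗ[R] W) {x y u w : V}
    (hxy : LinearIndependent R ![x, y]) (hx : f x = 0) (hy : f y = 0)
    (huw : LinearIndependent R ![f u, f w]) :
    LinearIndependent R ![x, y, u, w] := by
  rw [LinearIndependent.pair_iff] at hxy huw
  rw [Fintype.linearIndependent_iff]
  intro g hg
  simp only [Fin.sum_univ_four, Matrix.cons_val] at hg
  obtain ⟨hu, hw⟩ : g 2 = 0 ∧ g 3 = 0 := huw _ _ <| by
    simpa [hx, hy] using congrArg f hg
  obtain ⟨hx, hy⟩ : g 0 = 0 ∧ g 1 = 0 := hxy _ _ <| by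
    simpa [hu, hw] using hg
  intro i
  fin_cases i <;> assumption

theorem exists_mem_ne_ne_of_three {α : Type*} {a b c : α} (hab : a ≠ b) (hac : a ≠ c)
    (hbc : b ≠ c) (x y : α) : ∃ w ∈ ({a, b, c} : Set α), w ≠ x ∧ w ≠ y := by
  simp only [Set.mem_insert_iff, Set.mem_singleton_iff, exists_eq_or_imp, exists_eq_left]
  by_cases hax : a = x <;> by_cases hbx : b = x <;> grind

def projE34 : (Fin 4 → ZMod 2) →ₗ[ZMod 2] (Fin 4 → ZMod 2) :=
  (LinearMap.proj 2).smulRight e3 + (LinearMap.proj 3).smulRight e4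

@[simp] theorem projE34_e1 : projE34 e1 = 0 := by decide
@[simp] theorem projE34_e2 : projE34 e2 = 0 := by decide
@[simp] theorem projE34_e3 : projE34 e3 = e3 := by decide
@[simp] theorem projE34_e4 : projE34 e4 = e4 := by decide

theorem smul_e3_add_smul_e4_ne_zero {c d : ZMod 2} (hcd : ¬(c = 0 ∧ d = 0)) :
    c • e3 + d • e4 ≠ 0 := by
  intro h
  exact hcd ⟨by simpa [e3, e4] using congrFun h 2, by simpa [e3, e4] using congrFun h 3⟩

theorem linearIndependent_of_mem_e12_of_mem_e34 {x y : Fin 4 → ZMod 2}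
    (hx : x ∈ ({e1, e2, e1 + e2} : Set (Fin 4 → ZMod 2)))
    (hy : y ∈ ({e1, e2, e1 + e2} : Set (Fin 4 → ZMod 2))) (hxy : x ≠ y)
    (a b c d : ZMod 2) (hcd : ¬(c = 0 ∧ d = 0))
    {w : Fin 4 → ZMod 2} (hw : w ∈ ({e3, e4, e3 + e4} : Set (Fin 4 → ZMod 2)))
    (hwv : w ≠ c • e3 + d • e4) :
    LinearIndependent (ZMod 2) ![x, y, a • e1 + b • e2 + c • e3 + d • e4, w] := by
  have hproj_e12 : ∀ z ∈ ({e1, e2, e1 + e2} : Set (Fin 4 → ZMod 2)), projE34 z = 0 := by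
    simp
  have hne_zero : ∀ z ∈ ({e1, e2, e1 + e2} : Set (Fin 4 → ZMod 2)), z ≠ 0 := by
    simp only [Set.mem_insert_iff, Set.mem_singleton_iff, forall_eq_or_imp, forall_eq]
    decide
  obtain ⟨hproj_w, hw_ne_zero⟩ : projE34 w = w ∧ w ≠ 0 := by
    rcases hw with rfl | rfl | rfl <;> decide
  refine linearIndependent_four_of_map_eq_zero projE34
    (linearIndependent_pair_of_ne_zero_of_ne (hne_zero x hx) (hne_zero y hy) hxy)
    (hproj_e12 x hx) (hproj_e12 y hy) ?_
  simp only [map_add, map_smul, projE34_e1, projE34_e2, projE34_e3, projE34_e4, smul_zero,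
    zero_add, hproj_w]
  exact linearIndependent_pair_of_ne_zero_of_ne (smul_e3_add_smul_e4_ne_zero hcd) hw_ne_zero
    hwv.symm

/-- Resolution of a bad edge with facet vectors `e1, e2, e1+e2`: for facet vectors
`v4 = a•e1 + b•e2 + c•e3 + d•e4` and `v5 = p•e1 + q•e2 + r•e3 + s•e4` at its two
endpoints with `(c,d) ≠ (0,0)` and `(r,s) ≠ (0,0)`, there is
`w ∈ {e3, e4, e3+e4}` with `w ≠ c•e3 + d•e4` and `w ≠ r•e3 + s•e4`, and for any
such `w` all six families corresponding to the six new vertices of the truncation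
are linearly independent. -/
theorem bad_edge_resolution (a b c d p q r s : ZMod 2)
    (hcd : ¬(c = 0 ∧ d = 0)) (hrs : ¬(r = 0 ∧ s = 0))
    (v4 v5 : Fin 4 → ZMod 2)
    (hv4 : v4 = a • e1 + b • e2 + c • e3 + d • e4)
    (hv5 : v5 = p • e1 + q • e2 + r • e3 + s • e4) :
    (∃ w ∈ ({e3, e4, e3 + e4} : Set (Fin 4 → ZMod 2)),
        w ≠ c • e3 + d • e4 ∧ w ≠ r • e3 + s • e4) ∧
    ∀ w ∈ ({e3, e4, e3 + e4} : Set (Fin 4 → ZMod 2)),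
      w ≠ c • e3 + d • e4 → w ≠ r • e3 + s • e4 →
        (LinearIndependent (ZMod 2) ![e1, e2, v4, w] ∧
         LinearIndependent (ZMod 2) ![e1, e1 + e2, v4, w] ∧
         LinearIndependent (ZMod 2) ![e2, e1 + e2, v4, w] ∧
         LinearIndependent (ZMod 2) ![e1, e2, v5, w] ∧
         LinearIndependent (ZMod 2) ![e1, e1 + e2, v5, w] ∧
         LinearIndependent (ZMod 2) ![e2, e1 + e2, v5, w]) := by
  subst hv4 hv5
  refine ⟨exists_mem_ne_ne_of_three (by decide) (by decide) (by decide) _ _, ?_⟩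
  intro w hw hw4 hw5
  have he1 : e1 ∈ ({e1, e2, e1 + e2} : Set (Fin 4 → ZMod 2)) := by simp
  have he2 : e2 ∈ ({e1, e2, e1 + e2} : Set (Fin 4 → ZMod 2)) := by simp
  have he12 : e1 + e2 ∈ ({e1, e2, e1 + e2} : Set (Fin 4 → ZMod 2)) := by simp
  have h12 : e1 ≠ e2 := by decide
  have h1_12 : e1 ≠ e1 + e2 := by decide
  have h2_12 : e2 ≠ e1 + e2 := by decide
  exact ⟨linearIndependent_of_mem_e12_of_mem_e34 he1 he2 h12 a b c d hcd hw hw4,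
    linearIndependent_of_mem_e12_of_mem_e34 he1 he12 h1_12 a b c d hcd hw hw4,
    linearIndependent_of_mem_e12_of_mem_e34 he2 he12 h2_12 a b c d hcd hw hw4,
    linearIndependent_of_mem_e12_of_mem_e34 he1 he2 h12 p q r s hrs hw hw5,
    linearIndependent_of_mem_e12_of_mem_e34 he1 he12 h1_12 p q r s hrs hw hw5,
    linearIndependent_of_mem_e12_of_mem_e34 he2 he12 h2_12 p q r s hrs hw hw5⟩
end

section
/- Let u1, u2, u3, u4 ∈ (ZMod 2)^4 satisfy u1 + u2 + u3 + u4 = 0 and suppose that every 3-element subfamily {u_i, u_j, u_k} (1 ≤ i < j < k ≤ 4) is linearly independent over ZMod 2. Then there exists w ∈ (ZMod 2)^4 such that for every 1 ≤ i < j < k ≤ 4 the family {u_i, u_j, u_k, w} is linearly independent (hence a basis of (ZMod 2)^4). -/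
/-!
All four vectors lie in the span `W` of `u1, u2, u3` (since `u4 = -(u1 + u2 + u3)`), a subspace of
dimension at most `3` in a `4`-dimensional space. Any `w ∉ W` then extends each independent triple
drawn from `W` to an independent quadruple.
-/

open Module Submodule

section

variable {K V : Type*} [DivisionRing K] [AddCommGroup V] [Module K V]

theorem exists_notMem_span_range_of_card_lt_finrank {ι : Type*} [Fintype ι] (v : ι → V)
    (hcard : Fintype.card ι < finrank K V) : ∃ x, x ∉ span K (Set.range v) := by
  have hlt : span K (Set.range v) < ⊤ :=
    lt_top_of_finrank_lt_finrank ((finrank_range_le_card v).trans_lt hcard)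
  obtain ⟨x, -, hx⟩ := SetLike.exists_of_lt hlt
  exact ⟨x, hx⟩

theorem LinearIndependent.finSnoc_of_forall_mem_of_notMem {n : ℕ} {v : Fin n → V}
    (hv : LinearIndependent K v) {W : Submodule K V} (hvW : ∀ i, v i ∈ W) {x : V} (hx : x ∉ W) :
    LinearIndependent K (Fin.snoc v x : Fin (n + 1) → V) :=
  linearIndependent_finSnoc.mpr
    ⟨hv, fun hspan => hx (span_le.mpr (Set.range_subset_iff.mpr hvW) hspan)⟩

theorem LinearIndependent.vecCons_three_of_mem_of_notMem {a b c x : V}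
    (habc : LinearIndependent K ![a, b, c]) {W : Submodule K V} (ha : a ∈ W) (hb : b ∈ W)
    (hc : c ∈ W) (hx : x ∉ W) : LinearIndependent K ![a, b, c, x] := by
  simpa using habc.finSnoc_of_forall_mem_of_notMem (by simp [Fin.forall_fin_succ, ha, hb, hc]) hx

end

/-- Bad-vertex resolution: if `u1 + u2 + u3 + u4 = 0` in `(ZMod 2)⁴` and every
3-element subfamily is linearly independent, then there is a vector `w` such that
each of the four families `{u_i, u_j, u_k, w}` is linearly independent. -/
theorem bad_vertex_resolution (u1 u2 u3 u4 : Fin 4 → ZMod 2)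
    (hsum : u1 + u2 + u3 + u4 = 0)
    (h123 : LinearIndependent (ZMod 2) ![u1, u2, u3])
    (h124 : LinearIndependent (ZMod 2) ![u1, u2, u4])
    (h134 : LinearIndependent (ZMod 2) ![u1, u3, u4])
    (h234 : LinearIndependent (ZMod 2) ![u2, u3, u4]) :
    ∃ w : Fin 4 → ZMod 2,
      LinearIndependent (ZMod 2) ![u1, u2, u3, w] ∧
      LinearIndependent (ZMod 2) ![u1, u2, u4, w] ∧
      LinearIndependent (ZMod 2) ![u1, u3, u4, w] ∧
      LinearIndependent (ZMod 2) ![u2, u3, u4, w] := by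
  set W := span (ZMod 2) (Set.range ![u1, u2, u3])
  have hu1 : u1 ∈ W := subset_span ⟨0, rfl⟩
  have hu2 : u2 ∈ W := subset_span ⟨1, rfl⟩
  have hu3 : u3 ∈ W := subset_span ⟨2, rfl⟩
  have hu4 : u4 ∈ W := by
    rw [eq_neg_of_add_eq_zero_right hsum]
    exact neg_mem (add_mem (add_mem hu1 hu2) hu3)
  obtain ⟨w, hw⟩ := exists_notMem_span_range_of_card_lt_finrank (K := ZMod 2) ![u1, u2, u3]
    (by simp)
  exact ⟨w, h123.vecCons_three_of_mem_of_notMem hu1 hu2 hu3 hw,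
    h124.vecCons_three_of_mem_of_notMem hu1 hu2 hu4 hw,
    h134.vecCons_three_of_mem_of_notMem hu1 hu3 hu4 hw,
    h234.vecCons_three_of_mem_of_notMem hu2 hu3 hu4 hw⟩
end

section
/- Let m ≥ 6 be a natural number. For any two distinct elements i, j of Fin m there exists a 4-element subset V of Fin m with i ∈ V and j ∈ V, where V is either of the form {0, x, x+1, m−1} for some 1 ≤ x ≤ m−3 or of the form {x, x+1, y, y+1} for some integers x, y with 0 ≤ x, x+2 ≤ y and y+1 ≤ m−1. -/
/-!
Gale's evenness condition for `C⁴(m)` says the vertices of the dual are the unions of two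
disjoint edges `{k, k + 1}` of the `m`-cycle: the first form uses the wrap-around edge
`{m - 1, 0}`, the second uses two edges inside `0, …, m - 1`. For `a < b`, if `a + 2 ≤ b ≤ m - 2`
the edges `{a, a + 1}` and `{b, b + 1}` do it. Otherwise `b = a + 1` or `b = m - 1`, and the
wrap-around edge together with `{x, x + 1}`, where `x` is `a` clamped to `[1, m - 3]`, contains
both `a` and `b`.
-/

open Fin.NatCast

namespace Fin

theorem natCast_ne_natCast {m a b : ℕ} [NeZero m] (ha : a < m) (hb : b < m) (hab : a ≠ b) :
    (a : Fin m) ≠ b := by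
  simpa [Fin.ext_iff, Fin.val_natCast, Nat.mod_eq_of_lt ha, Nat.mod_eq_of_lt hb] using hab

theorem card_natCast_four {m a b c d : ℕ} [NeZero m] (hab : a < b) (hbc : b < c) (hcd : c < d)
    (hdm : d < m) :
    ({(a : Fin m), (b : Fin m), (c : Fin m), (d : Fin m)} : Finset (Fin m)).card = 4 :=
  Finset.card_eq_four.2 ⟨_, _, _, _,
    natCast_ne_natCast (by omega) (by omega) (by omega),
    natCast_ne_natCast (by omega) (by omega) (by omega),
    natCast_ne_natCast (by omega) (by omega) (by omega),
    natCast_ne_natCast (by omega) (by omega) (by omega),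
    natCast_ne_natCast (by omega) (by omega) (by omega),
    natCast_ne_natCast (by omega) (by omega) (by omega), rfl⟩

end Fin

namespace CyclicPolytope

variable {m : ℕ} [NeZero m]

def outerVertex (m x : ℕ) [NeZero m] : Finset (Fin m) :=
  {0, (x : Fin m), ((x + 1 : ℕ) : Fin m), ((m - 1 : ℕ) : Fin m)}

def innerVertex (m x y : ℕ) [NeZero m] : Finset (Fin m) :=
  {(x : Fin m), ((x + 1 : ℕ) : Fin m), (y : Fin m), ((y + 1 : ℕ) : Fin m)}

def IsVertex (m : ℕ) [NeZero m] (V : Finset (Fin m)) : Prop :=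
  (∃ x : ℕ, 1 ≤ x ∧ x ≤ m - 3 ∧ V = outerVertex m x) ∨
    ∃ x y : ℕ, x + 2 ≤ y ∧ y + 1 ≤ m - 1 ∧ V = innerVertex m x y

theorem card_outerVertex {x : ℕ} (hx : 1 ≤ x) (hxm : x ≤ m - 3) : (outerVertex m x).card = 4 := by
  rw [outerVertex, ← Nat.cast_zero]
  exact Fin.card_natCast_four (by omega) (by omega) (by omega) (by omega)

theorem card_innerVertex {x y : ℕ} (hxy : x + 2 ≤ y) (hym : y + 1 ≤ m - 1) :
    (innerVertex m x y).card = 4 :=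
  Fin.card_natCast_four (by omega) (by omega) (by omega) (by omega)

theorem natCast_mem_outerVertex {c x : ℕ} (h : c = 0 ∨ c = x ∨ c = x + 1 ∨ c = m - 1) :
    (c : Fin m) ∈ outerVertex m x := by
  rcases h with rfl | rfl | rfl | rfl <;> simp [outerVertex]

theorem exists_isVertex_of_lt (hm : 4 ≤ m) {i j : Fin m} (hij : i < j) :
    ∃ V : Finset (Fin m), V.card = 4 ∧ i ∈ V ∧ j ∈ V ∧ IsVertex m V := by
  obtain ⟨a, ha⟩ := i
  obtain ⟨b, hb⟩ := j
  rw [Fin.mk_lt_mk] at hij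
  rw [← Fin.natCast_eq_mk ha, ← Fin.natCast_eq_mk hb]
  by_cases hinner : a + 2 ≤ b ∧ b + 2 ≤ m
  · exact ⟨innerVertex m a b, card_innerVertex hinner.1 (by omega), by simp [innerVertex],
      by simp [innerVertex], Or.inr ⟨a, b, hinner.1, by omega, rfl⟩⟩
  · set x := max 1 (min a (m - 3))
    exact ⟨outerVertex m x, card_outerVertex (by omega) (by omega),
      natCast_mem_outerVertex (by omega), natCast_mem_outerVertex (by omega),
      Or.inl ⟨x, by omega, by omega, rfl⟩⟩

end CyclicPolytope

/-- The dual of the cyclic polytope `C⁴(m)` is 2-neighborly for `m ≥ 6`: any two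
distinct facets `i, j ∈ Fin m` lie in a common vertex, i.e. in a common 4-element
set of one of the two Gale forms `{0, x, x+1, m-1}` (with `1 ≤ x ≤ m-3`) or
`{x, x+1, y, y+1}` (with `0 ≤ x`, `x+2 ≤ y`, `y+1 ≤ m-1`). -/
theorem dual_cyclic_two_neighborly (m : ℕ) [NeZero m] (hm : 6 ≤ m)
    (i j : Fin m) (hij : i ≠ j) :
    ∃ V : Finset (Fin m), V.card = 4 ∧ i ∈ V ∧ j ∈ V ∧
      ((∃ x : ℕ, 1 ≤ x ∧ x ≤ m - 3 ∧
          V = ({0, (x : Fin m), ((x + 1 : ℕ) : Fin m), ((m - 1 : ℕ) : Fin m)} :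
            Finset (Fin m))) ∨
       (∃ x y : ℕ, x + 2 ≤ y ∧ y + 1 ≤ m - 1 ∧
          V = ({(x : Fin m), ((x + 1 : ℕ) : Fin m), (y : Fin m),
                ((y + 1 : ℕ) : Fin m)} : Finset (Fin m)))) := by
  rcases hij.lt_or_gt with hlt | hgt
  · exact CyclicPolytope.exists_isVertex_of_lt (by omega) hlt
  · obtain ⟨V, hcard, hj, hi, hV⟩ := CyclicPolytope.exists_isVertex_of_lt (by omega) hgt
    exact ⟨V, hcard, hi, hj, hV⟩
end
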